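/- Let w = Σ_{n≥0} c(n) xⁿ ∈ ℚ[[x]] with c(n) = (6n)!/((3n)!(2n)!n!), and let θ = x·d/dx be the Euler derivation on formal power series. Then w satisfies the Picard–Fuchs equation θ²w - 12·x·(6θ+1)(6θ+5)·w = 0. -/

import Mathlib

/-!
Since `θ xⁿ = n xⁿ`, comparing coefficients of `xⁿ⁺¹` turns the differential equation into the
recurrence `(n+1)² c(n+1) = 12 (6n+1)(6n+5) c(n)`: in `c(n+1)/c(n)` the six new factors
`6n+1, …, 6n+6` of the numerator cancel against the six new factors of the denominator up to
`12 (6n+1)(6n+5)/(n+1)²`.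
-/

open PowerSeries
open scoped Nat

theorem PowerSeries.coeff_X_mul_derivative {R : Type*} [CommSemiring R] (f : R⟦X⟧) (n : ℕ) :
    coeff n (X * derivative R f) = n * coeff n f := by
  cases n with
  | zero => simp
  | succ n =>
    rw [coeff_succ_X_mul, coeff_derivative]
    push_cast
    ring

theorem Nat.cast_factorial_add {R : Type*} [CommSemiring R] (n k : ℕ) :
    ((n + k)! : R) = n ! * ∏ i ∈ Finset.range k, ((n : R) + 1 + i) := by
  rw [← Nat.factorial_mul_ascFactorial, Nat.ascFactorial_eq_prod_range]
  push_cast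
  rfl

def sexticCoeff (n : ℕ) : ℚ :=
  (6 * n)! / ((3 * n)! * (2 * n)! * n !)

theorem sexticCoeff_succ (n : ℕ) :
    ((n : ℚ) + 1) ^ 2 * sexticCoeff (n + 1) = 12 * (6 * n + 1) * (6 * n + 5) * sexticCoeff n := by
  rw [sexticCoeff, sexticCoeff, mul_add_one 6, mul_add_one 3, mul_add_one 2, Nat.cast_factorial_add,
    Nat.cast_factorial_add, Nat.cast_factorial_add, Nat.factorial_succ]
  simp only [Finset.prod_range_succ, Finset.prod_range_zero]
  push_cast
  field_simp
  ring

/-- The series `w = Σ (6n)!/((3n)!(2n)!n!) xⁿ` satisfies the Picard–Fuchs equation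
`θ²w - 12·x·(6θ+1)(6θ+5)·w = 0`, where `θ = x·d/dx`. -/
theorem sextic_period_picard_fuchs
    (c : ℕ → ℚ)
    (hc : ∀ n, c n = ((6 * n).factorial : ℚ) /
      (((3 * n).factorial : ℚ) * ((2 * n).factorial : ℚ) * (n.factorial : ℚ)))
    (w : PowerSeries ℚ) (hw : w = PowerSeries.mk c)
    (θ : PowerSeries ℚ → PowerSeries ℚ)
    (hθ : ∀ f, θ f = PowerSeries.X * PowerSeries.derivativeFun f) :
    θ (θ w) - 12 * PowerSeries.X *
      (6 * θ (6 * θ w + 5 * w) + (6 * θ w + 5 * w)) = 0 := by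
  have coeff_θ (f : ℚ⟦X⟧) (n : ℕ) : coeff n (θ f) = n * coeff n f :=
    (hθ f).symm ▸ coeff_X_mul_derivative f n
  have coeff_w (n : ℕ) : coeff n w = sexticCoeff n := by simp [hw, hc, sexticCoeff]
  rw [mul_comm 12, mul_assoc]
  ext (_ | n)
  · rw [map_sub, coeff_θ, coeff_zero_X_mul]
    simp
  · simp [coeff_θ, coeff_w, ← map_ofNat C, coeff_succ_X_mul]
    linear_combination sexticCoeff_succ n
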